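/- Let $n \geq 3$ and let $L : (\mathbb{Z}/n\mathbb{Z})^d \to \{C,A,T\}$ be a labeling in which the number of CAT occurrences equals $(3^{d-1}/2) n^d$. Then $n$ is a multiple of $4$. -/
import Mathlib


open Finset

inductive Letter | C | A | T
deriving DecidableEq



namespace Cat

abbrev tern : Finset ℤ := {-1, 0, 1}

def U (d : ℕ) : Finset (Fin d → ℤ) := Fintype.piFinset (fun _ => tern)

def Ustar (d : ℕ) : Finset (Fin d → ℤ) := (U d).filter (· ≠ 0)

def pvec (d : ℕ) : Fin d → ℤ := fun _ => -1

lemma mem_U {d : ℕ} {u : Fin d → ℤ} : u ∈ U d ↔ ∀ j, u j ∈ tern :=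
  Fintype.mem_piFinset

lemma zero_mem_U {d : ℕ} : (0 : Fin d → ℤ) ∈ U d := by
  rw [mem_U]; intro j; simp [tern]

lemma neg_mem_U {d : ℕ} {u : Fin d → ℤ} (h : u ∈ U d) : -u ∈ U d := by
  rw [mem_U] at h ⊢
  intro j
  have := h j
  simp only [tern, Finset.mem_insert, Finset.mem_singleton] at this ⊢
  rcases this with h | h | h <;> simp [Pi.neg_apply, h]

lemma snoc_ne_zero {d : ℕ} {u : Fin d → ℤ} {a : ℤ} (ha : a ≠ 0) :
    Fin.snoc u a ≠ (0 : Fin (d+1) → ℤ) := by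
  intro h
  have := congrFun h (Fin.last d)
  simp [Fin.snoc_last] at this
  exact ha this

lemma snoc_zero_eq_zero_iff {d : ℕ} {u : Fin d → ℤ} :
    Fin.snoc u (0:ℤ) = (0 : Fin (d+1) → ℤ) ↔ u = 0 := by
  constructor
  · intro h
    funext j
    have := congrFun h (Fin.castSucc j)
    simpa [Fin.snoc_castSucc] using this
  · rintro rfl
    funext j
    refine Fin.lastCases ?_ ?_ j <;> simp [Fin.snoc_last, Fin.snoc_castSucc]

lemma neg_snoc {d : ℕ} (u : Fin d → ℤ) (a : ℤ) :
    -(Fin.snoc u a) = (Fin.snoc (-u) (-a) : Fin (d+1) → ℤ) := by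
  funext j
  refine Fin.lastCases ?_ ?_ j <;> simp [Fin.snoc_last, Fin.snoc_castSucc]

lemma snoc_add_snoc {d : ℕ} (u v : Fin d → ℤ) (a b : ℤ) :
    (Fin.snoc u a + Fin.snoc v b : Fin (d+1) → ℤ) = Fin.snoc (u + v) (a + b) := by
  funext j
  refine Fin.lastCases ?_ ?_ j <;> simp [Fin.snoc_last, Fin.snoc_castSucc]

lemma snoc_sub_snoc {d : ℕ} (u v : Fin d → ℤ) (a b : ℤ) :
    (Fin.snoc u a - Fin.snoc v b : Fin (d+1) → ℤ) = Fin.snoc (u - v) (a - b) := by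
  funext j
  refine Fin.lastCases ?_ ?_ j <;> simp [Fin.snoc_last, Fin.snoc_castSucc]

lemma pvec_succ (d : ℕ) : pvec (d+1) = Fin.snoc (pvec d) (-1) := by
  funext j
  refine Fin.lastCases ?_ ?_ j <;> simp [pvec, Fin.snoc_last, Fin.snoc_castSucc]

lemma sum_U_succ {d : ℕ} (F : (Fin (d+1) → ℤ) → ℕ) :
    ∑ v ∈ U (d+1), F v
      = ∑ u ∈ U d, (F (Fin.snoc u (-1)) + F (Fin.snoc u 0) + F (Fin.snoc u 1)) := by
  have h1 : ∑ v ∈ U (d+1), F v = ∑ p ∈ (U d) ×ˢ tern, F (Fin.snoc p.1 p.2) := by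
    refine Finset.sum_nbij' (fun v => (Fin.init v, v (Fin.last d))) (fun p => Fin.snoc p.1 p.2) ?_ ?_ ?_ ?_ ?_
    · intro v hv
      rw [mem_U] at hv
      refine Finset.mem_product.2 ⟨?_, hv (Fin.last d)⟩
      rw [mem_U]; intro j; exact hv _
    · intro p hp
      rw [Finset.mem_product] at hp
      rw [mem_U]
      intro j
      refine Fin.lastCases ?_ ?_ j
      · simpa [Fin.snoc_last] using hp.2
      · intro i
        simpa [Fin.snoc_castSucc] using (mem_U.1 hp.1) i
    · intro v _
      exact Fin.snoc_init_self v
    · intro p _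
      ext
      · simp [Fin.init_snoc]
      · simp [Fin.snoc_last]
    · intro v _
      rw [Fin.snoc_init_self]
  rw [h1, Finset.sum_product]
  refine Finset.sum_congr rfl fun u _ => ?_
  show ∑ e ∈ ({-1, 0, 1} : Finset ℤ), F (Fin.snoc u e) = _
  rw [Finset.sum_insert (by decide), Finset.sum_insert (by decide), Finset.sum_singleton]
  ring

lemma sum_U_neg {d : ℕ} (F : (Fin d → ℤ) → ℕ) :
    ∑ u ∈ U d, F (-u) = ∑ u ∈ U d, F u := by
  refine Finset.sum_nbij' (fun u => -u) (fun u => -u) ?_ ?_ ?_ ?_ ?_ <;>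
    intro u hu <;> simp [neg_mem_U, hu, neg_mem_U hu]

lemma sum_U_eq_zero_add {d : ℕ} (F : (Fin d → ℤ) → ℕ) :
    ∑ u ∈ U d, F u = F 0 + ∑ u ∈ Ustar d, F u := by
  have h0 : (0 : Fin d → ℤ) ∈ U d := zero_mem_U
  rw [Ustar]
  rw [← Finset.sum_filter_add_sum_filter_not (U d) (· ≠ 0) F]
  have : (U d).filter (fun u => ¬ u ≠ 0) = {0} := by
    ext u
    simp only [Finset.mem_filter, Finset.mem_singleton, not_not]
    constructor
    · exact fun h => h.2
    · rintro rfl; exact ⟨h0, rfl⟩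
  rw [this, Finset.sum_singleton]
  ring

lemma sum_Ustar_succ {d : ℕ} (g : (Fin (d+1) → ℤ) → ℕ) :
    ∑ v ∈ Ustar (d+1), g v
      = ∑ u ∈ U d, (g (Fin.snoc u (-1)) + g (Fin.snoc u 1))
        + ∑ u ∈ Ustar d, g (Fin.snoc u 0) := by
  rw [Ustar, Finset.sum_filter, sum_U_succ]
  have hterm : ∀ u ∈ U d,
      ((if Fin.snoc u (-1) ≠ (0 : Fin (d+1) → ℤ) then g (Fin.snoc u (-1)) else 0)
        + (if Fin.snoc u (0:ℤ) ≠ (0 : Fin (d+1) → ℤ) then g (Fin.snoc u 0) else 0)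
        + (if Fin.snoc u (1:ℤ) ≠ (0 : Fin (d+1) → ℤ) then g (Fin.snoc u 1) else 0))
      = (g (Fin.snoc u (-1)) + g (Fin.snoc u 1)) + (if u ≠ 0 then g (Fin.snoc u 0) else 0) := by
    intro u _
    have h1 := snoc_ne_zero (u := u) (show (-1:ℤ) ≠ 0 by norm_num)
    have h2 := snoc_ne_zero (u := u) (show (1:ℤ) ≠ 0 by norm_num)
    have h0 : (Fin.snoc u (0:ℤ) ≠ (0 : Fin (d+1) → ℤ)) ↔ u ≠ 0 := not_congr snoc_zero_eq_zero_iff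
    rw [if_pos h1, if_pos h2, if_congr h0 rfl rfl]
    ring
  rw [Finset.sum_congr rfl hterm, Finset.sum_add_distrib]
  congr 1
  rw [Ustar, Finset.sum_filter]


lemma list_sum_map_add {γ : Type*} (l : List γ) (F F' : γ → ℕ) :
    (l.map (fun x => F x + F' x)).sum = (l.map F).sum + (l.map F').sum := by
  induction l with
  | nil => simp
  | cons a l ih => simp [ih]; ring

lemma exists_duos : ∀ d : ℕ, ∃ l : List ((Fin d → ℤ) × (Fin d → ℤ)),
    (∀ f : (Fin d → ℤ) → ℕ,
      f (pvec d) + ((l.map (fun ab => f ab.1)).sum + (l.map (fun ab => f ab.2)).sum)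
        = ∑ u ∈ U d, f u) ∧
    (∀ g : (Fin d → ℤ) → ℕ,
      (l.map (fun ab => g (ab.1 - ab.2))).sum + (l.map (fun ab => g (ab.2 - ab.1))).sum
        = ∑ v ∈ Ustar d, g v)
  | 0 => by
    refine ⟨[], ?_, ?_⟩
    · intro f
      have hU : U 0 = {pvec 0} := by
        ext u
        simp only [Finset.mem_singleton]
        constructor
        · intro _; funext j; exact j.elim0
        · rintro rfl; exact (mem_U).2 fun j => j.elim0
      simp [hU]
    · intro g
      have hU : Ustar 0 = ∅ := by
        ext u
        simp only [Ustar, Finset.mem_filter, Finset.notMem_empty, iff_false, not_and, not_not]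
        intro _
        funext j; exact j.elim0
      simp [hU]
  | (d+1) => by
    obtain ⟨l, hI, hII⟩ := exists_duos d
    refine ⟨(l.map fun ab => (Fin.snoc ab.1 0, Fin.snoc ab.2 (-1)))
         ++ (l.map fun ab => (Fin.snoc ab.1 1, Fin.snoc ab.2 1))
         ++ (l.map fun ab => (Fin.snoc ab.1 (-1), Fin.snoc ab.2 0))
         ++ [(Fin.snoc (pvec d) 1, Fin.snoc (pvec d) 0)], ?_, ?_⟩
    · intro f
      rw [sum_U_succ, pvec_succ]
      have k1 := hI (fun u => f (Fin.snoc u (-1)))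
      have k2 := hI (fun u => f (Fin.snoc u 0))
      have k3 := hI (fun u => f (Fin.snoc u 1))
      simp only [List.map_append, List.sum_append, List.map_map, Function.comp_def,
        List.map_cons, List.map_nil, List.sum_cons, List.sum_nil] at *
      rw [Finset.sum_add_distrib, Finset.sum_add_distrib]
      omega
    · intro g
      rw [sum_Ustar_succ]
      have k1 := hII (fun c => g (Fin.snoc c (-1)))
      have k2 := hII (fun c => g (Fin.snoc c 0))
      have k3 := hII (fun c => g (Fin.snoc c 1))
      have hz : ∑ u ∈ U d, (g (Fin.snoc u (-1)) + g (Fin.snoc u 1))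
          = (g (Fin.snoc (0 : Fin d → ℤ) (-1)) + g (Fin.snoc (0 : Fin d → ℤ) 1))
            + ∑ u ∈ Ustar d, (g (Fin.snoc u (-1)) + g (Fin.snoc u 1)) :=
        sum_U_eq_zero_add (fun u => g (Fin.snoc u (-1)) + g (Fin.snoc u 1))
      simp only [List.map_append, List.sum_append, List.map_map, Function.comp_def,
        List.map_cons, List.map_nil, List.sum_cons, List.sum_nil, snoc_sub_snoc,
        sub_self, sub_neg_eq_add, zero_sub, neg_sub] at *
      norm_num at *
      rw [hz, Finset.sum_add_distrib]
      omega

-- === part C ===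

section Main

variable {n : ℕ} [NeZero n] {D : ℕ} (L : (Fin D → ZMod n) → Letter)

def Cen (w : Fin D → ZMod n) : Finset (Fin D → ZMod n) :=
  univ.filter (fun y => L (y - w) = Letter.C ∧ L y = Letter.A ∧ L (y + w) = Letter.T)

def cnt (w : Fin D → ZMod n) : ℕ := (Cen L w).card

lemma mem_Cen {w y : Fin D → ZMod n} :
    y ∈ Cen L w ↔ (L (y - w) = Letter.C ∧ L y = Letter.A ∧ L (y + w) = Letter.T) := by
  simp [Cen]

lemma card_univ_pi : Fintype.card (Fin D → ZMod n) = n ^ D := by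
  rw [Fintype.card_fun, ZMod.card, Fintype.card_fin]

lemma cen_A {w y : Fin D → ZMod n} (h : y ∈ Cen L w) : L y = Letter.A :=
  ((mem_Cen L).1 h).2.1

lemma cen_union_A {w y : Fin D → ZMod n} (h : y ∈ Cen L w ∪ Cen L (-w)) : L y = Letter.A := by
  rcases Finset.mem_union.1 h with h | h <;> exact cen_A L h

lemma cen_union_right {w y : Fin D → ZMod n} (h : y ∈ Cen L w ∪ Cen L (-w)) :
    L (y + w) = Letter.T ∨ L (y + w) = Letter.C := by
  rcases Finset.mem_union.1 h with h | h
  · exact Or.inl ((mem_Cen L).1 h).2.2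
  · right
    have e : y - -w = y + w := by abel
    rw [← e]
    exact ((mem_Cen L).1 h).1

lemma cen_pair_disjoint (w : Fin D → ZMod n) : Disjoint (Cen L w) (Cen L (-w)) := by
  rw [Finset.disjoint_left]
  intro y h1 h2
  rw [mem_Cen] at h1 h2
  have e : y - -w = y + w := by abel
  rw [e] at h2
  rw [h1.2.2] at h2
  exact Letter.noConfusion h2.1

lemma pair_card (Q : Fin D → ZMod n) :
    (Cen L Q ∪ Cen L (-Q)).card = cnt L Q + cnt L (-Q) :=
  Finset.card_union_of_disjoint (cen_pair_disjoint L Q)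


lemma triangle (A B : Fin D → ZMod n) :
    (cnt L A + cnt L (-A)) + (cnt L B + cnt L (-B)) + (cnt L (A+B) + cnt L (-(A+B)))
      ≤ n ^ D := by
  classical
  set T1 : Finset (Fin D → ZMod n) := Cen L A ∪ Cen L (-A) with hT1
  set T2 : Finset (Fin D → ZMod n) := (Cen L B ∪ Cen L (-B)).image (· + (-B)) with hT2
  set T3 : Finset (Fin D → ZMod n) := (Cen L (A+B) ∪ Cen L (-(A+B))).image (· + A) with hT3
  have c1 : T1.card = cnt L A + cnt L (-A) := pair_card L A
  have c2 : T2.card = cnt L B + cnt L (-B) := by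
    rw [hT2, Finset.card_image_of_injective _ (add_left_injective (-B))]
    exact pair_card L B
  have c3 : T3.card = cnt L (A+B) + cnt L (-(A+B)) := by
    rw [hT3, Finset.card_image_of_injective _ (add_left_injective A)]
    exact pair_card L (A+B)
  have d12 : Disjoint T1 T2 := by
    rw [Finset.disjoint_left]
    intro y h1 h2
    have hyA : L y = Letter.A := cen_union_A L h1
    obtain ⟨z, hz, hzy⟩ := Finset.mem_image.1 h2
    rcases Finset.mem_union.1 hz with h | h
    · -- z ∈ Cen B : L (z - B) = C , z + -B = y
      have hC : L (z - B) = Letter.C := ((mem_Cen L).1 h).1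
      have e : z - B = y := by rw [← hzy]; abel
      rw [e] at hC
      exact Letter.noConfusion (hC.symm.trans hyA)
    · -- z ∈ Cen (-B) : L (z + -B) = T
      have hT : L (z + -B) = Letter.T := ((mem_Cen L).1 h).2.2
      rw [hzy] at hT
      exact Letter.noConfusion (hT.symm.trans hyA)
  have d13 : Disjoint T1 T3 := by
    rw [Finset.disjoint_left]
    intro y h1 h3
    obtain ⟨z, hz, hzy⟩ := Finset.mem_image.1 h3
    have hzA : L z = Letter.A := cen_union_A L hz
    have e : z = y - A := by rw [← hzy]; abel
    rw [e] at hzA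
    rcases Finset.mem_union.1 h1 with h | h
    · rw [((mem_Cen L).1 h).1] at hzA
      exact Letter.noConfusion hzA
    · have e2 : y - -A = y + A := by abel
      have e3 : y + -A = y - A := by abel
      have := ((mem_Cen L).1 h).2.2
      rw [e3] at this
      rw [this] at hzA
      exact Letter.noConfusion hzA
  have d23 : Disjoint T2 T3 := by
    rw [Finset.disjoint_left]
    intro y h2 h3
    obtain ⟨z, hz, hzy⟩ := Finset.mem_image.1 h2
    obtain ⟨z', hz', hzy'⟩ := Finset.mem_image.1 h3
    have hzA : L z = Letter.A := cen_union_A L hz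
    have e : z' + (A + B) = z := by
      have h1 : z = y + B := by rw [← hzy]; abel
      have h2' : z' = y - A := by rw [← hzy']; abel
      rw [h1, h2']; abel
    rcases Finset.mem_union.1 hz' with h | h
    · have := ((mem_Cen L).1 h).2.2
      rw [e] at this
      rw [this] at hzA
      exact Letter.noConfusion hzA
    · have := ((mem_Cen L).1 h).1
      have e2 : z' - -(A + B) = z' + (A + B) := by abel
      rw [e2, e] at this
      rw [this] at hzA
      exact Letter.noConfusion hzA
  have hle : (T1 ∪ T2 ∪ T3).card ≤ n ^ D := by
    rw [← card_univ_pi (n := n) (D := D), ← Finset.card_univ]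
    exact Finset.card_le_univ _
  have : (T1 ∪ T2 ∪ T3).card = T1.card + T2.card + T3.card := by
    rw [Finset.card_union_of_disjoint, Finset.card_union_of_disjoint d12]
    exact Finset.disjoint_union_left.2 ⟨d13, d23⟩
  omega


lemma pair_le (Q : Fin D → ZMod n) : 2 * (cnt L Q + cnt L (-Q)) ≤ n ^ D := by
  classical
  set CP : Finset (Fin D → ZMod n) := Cen L Q ∪ Cen L (-Q) with hCP
  have hdisj : Disjoint CP (CP.image (· + Q)) := by
    rw [Finset.disjoint_left]
    intro y h1 h2
    obtain ⟨z, hz, hzy⟩ := Finset.mem_image.1 h2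
    have hyA : L y = Letter.A := cen_union_A L h1
    rcases cen_union_right L hz with h | h <;>
      · rw [hzy] at h
        exact Letter.noConfusion (h.symm.trans hyA)
  have hcard : (CP ∪ CP.image (· + Q)).card = 2 * (cnt L Q + cnt L (-Q)) := by
    rw [Finset.card_union_of_disjoint hdisj,
      Finset.card_image_of_injective _ (add_left_injective Q), pair_card L Q]
    ring
  rw [← hcard, ← card_univ_pi (n := n) (D := D), ← Finset.card_univ]
  exact Finset.card_le_univ _

lemma nsmul_zmod_vec (Q : Fin D → ZMod n) : n • Q = 0 := by
  funext j
  show n • Q j = 0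
  rw [nsmul_eq_mul, ZMod.natCast_self, zero_mul]

lemma four_dvd_of_eq (hn : 3 ≤ n) (hD : D ≠ 0) (Q : Fin D → ZMod n)
    (hQeq : 2 * (cnt L Q + cnt L (-Q)) = n ^ D) : 4 ∣ n := by
  classical
  have heven : 2 ∣ n := by
    have : 2 ∣ n ^ D := ⟨cnt L Q + cnt L (-Q), hQeq.symm⟩
    exact Nat.Prime.dvd_of_dvd_pow Nat.prime_two this
  set CP : Finset (Fin D → ZMod n) := Cen L Q ∪ Cen L (-Q) with hCP
  have hdisj : Disjoint CP (CP.image (· + Q)) := by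
    rw [Finset.disjoint_left]
    intro y h1 h2
    obtain ⟨z, hz, hzy⟩ := Finset.mem_image.1 h2
    have hyA : L y = Letter.A := cen_union_A L h1
    rcases cen_union_right L hz with h | h <;>
      · rw [hzy] at h
        exact Letter.noConfusion (h.symm.trans hyA)
  have hcard : (CP ∪ CP.image (· + Q)).card = 2 * (cnt L Q + cnt L (-Q)) := by
    rw [Finset.card_union_of_disjoint hdisj,
      Finset.card_image_of_injective _ (add_left_injective Q), pair_card L Q]
    ring
  have huniv : CP ∪ CP.image (· + Q) = univ := by
    apply Finset.eq_univ_of_card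
    rw [hcard, hQeq, card_univ_pi]
  have htot : ∀ x : Fin D → ZMod n, x ∈ CP ∨ ∃ z ∈ CP, z + Q = x := by
    intro x
    have : x ∈ CP ∪ CP.image (· + Q) := huniv ▸ Finset.mem_univ x
    rcases Finset.mem_union.1 this with h | h
    · exact Or.inl h
    · obtain ⟨z, hz, hzy⟩ := Finset.mem_image.1 h
      exact Or.inr ⟨z, hz, hzy⟩
  have hstep : ∀ y ∈ CP, y + Q + Q ∈ CP := by
    intro y hy
    rcases htot (y + Q + Q) with h | ⟨z, hz, hzy⟩
    · exact h
    · exfalso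
      have hzq : z = y + Q := by
        have := add_right_cancel hzy
        exact this
      have hzA : L z = Letter.A := cen_union_A L hz
      rw [hzq] at hzA
      rcases cen_union_right L hy with h' | h' <;>
        exact Letter.noConfusion (h'.symm.trans hzA)
  have hne : CP.Nonempty := by
    rw [← Finset.card_pos, pair_card L Q]
    have : 3 ≤ n ^ D := le_trans hn (Nat.le_self_pow hD n)
    omega
  obtain ⟨y0, hy0⟩ := hne
  have hchain : ∀ k : ℕ, y0 + (2*k) • Q ∈ CP := by
    intro k
    induction k with
    | zero => simpa using hy0
    | succ k ih =>
      have e : y0 + (2*(k+1)) • Q = (y0 + (2*k) • Q) + Q + Q := by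
        have : 2*(k+1) = (2*k) + 1 + 1 := by ring
        rw [this, succ_nsmul, succ_nsmul]
        abel
      rw [e]
      exact hstep _ ih
  set m : ℕ → Letter := fun k => L (y0 + (2*k+1) • Q) with hm
  have halt : ∀ k, (m k = Letter.C ∧ m (k+1) = Letter.T)
      ∨ (m k = Letter.T ∧ m (k+1) = Letter.C) := by
    intro k
    have hc := hchain (k+1)
    have e1 : (y0 + (2*(k+1)) • Q) - Q = y0 + (2*k+1) • Q := by
      have : 2*(k+1) = (2*k+1) + 1 := by ring
      rw [this, succ_nsmul]
      abel
    have e2 : (y0 + (2*(k+1)) • Q) + Q = y0 + (2*(k+1)+1) • Q := by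
      rw [succ_nsmul]
      abel
    rcases Finset.mem_union.1 hc with h | h <;> rw [mem_Cen] at h
    · left
      constructor
      · show L (y0 + (2*k+1) • Q) = Letter.C
        rw [← e1]; exact h.1
      · show L (y0 + (2*(k+1)+1) • Q) = Letter.T
        rw [← e2]; exact h.2.2
    · right
      constructor
      · show L (y0 + (2*k+1) • Q) = Letter.T
        have e3 : (y0 + (2*(k+1)) • Q) + -Q = y0 + (2*k+1) • Q := by
          rw [← e1]; abel
        rw [← e3]; exact h.2.2
      · show L (y0 + (2*(k+1)+1) • Q) = Letter.C
        have e4 : (y0 + (2*(k+1)) • Q) - -Q = y0 + (2*(k+1)+1) • Q := by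
          rw [← e2]; abel
        rw [← e4]; exact h.1
  have hm1 : m 1 ≠ m 0 := by
    rcases halt 0 with ⟨h1, h2⟩ | ⟨h1, h2⟩ <;> rw [h1, h2] <;> simp
  have hstep2 : ∀ k, m (k+2) = m k := by
    intro k
    rcases halt k with ⟨h1, h2⟩ | ⟨h1, h2⟩ <;>
      rcases halt (k+1) with ⟨h3, h4⟩ | ⟨h3, h4⟩ <;>
        first
          | (exact (h4.trans h1.symm).symm ▸ (h4.trans h1.symm))
          | (rw [h1]; rw [h2] at h3; exact Letter.noConfusion h3)
          | (show m (k+1+1) = m k; rw [h4, h1])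
  have heven2 : ∀ j k, m (k + 2*j) = m k := by
    intro j
    induction j with
    | zero => intro k; simp
    | succ j ih =>
      intro k
      have : k + 2*(j+1) = (k + 2) + 2*j := by ring
      rw [this, ih (k+2), hstep2 k]
  have hper : m (n/2) = m 0 := by
    show L (y0 + (2*(n/2)+1) • Q) = L (y0 + (2*0+1) • Q)
    have h2n : 2 * (n/2) = n := Nat.mul_div_cancel' heven
    have e : y0 + (2*(n/2)+1) • Q = y0 + (2*0+1) • Q := by
      rw [h2n, add_nsmul, nsmul_zmod_vec]
      abel
    rw [e]
  -- n/2 must be even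
  have hhalf : 2 ∣ (n / 2) := by
    by_contra hodd
    obtain ⟨j, hj⟩ : ∃ j, n / 2 = 1 + 2*j := ⟨n/2/2, by omega⟩
    rw [hj, heven2 j 1] at hper
    exact hm1 hper
  obtain ⟨r, hr⟩ := hhalf
  obtain ⟨s, hs⟩ := heven
  exact ⟨r, by omega⟩


def tc (u : Fin D → ℤ) : Fin D → ZMod n := fun j => ((u j : ℤ) : ZMod n)

lemma tc_add (u v : Fin D → ℤ) : tc (n := n) (u + v) = tc u + tc v := by
  funext j; simp [tc]

lemma tc_neg (u : Fin D → ℤ) : tc (n := n) (-u) = - tc u := by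
  funext j; simp [tc]

lemma zmod_one_ne_zero (hn : 3 ≤ n) : (1 : ZMod n) ≠ 0 := by
  haveI : Fact (1 < n) := ⟨by omega⟩
  exact one_ne_zero

lemma zmod_negone_ne_zero (hn : 3 ≤ n) : (-1 : ZMod n) ≠ 0 := by
  simp only [ne_eq, neg_eq_zero]
  exact zmod_one_ne_zero hn

lemma zmod_one_ne_negone (hn : 3 ≤ n) : (1 : ZMod n) ≠ -1 := by
  intro h
  have h2 : ((2 : ℕ) : ZMod n) = 0 := by
    push_cast
    have := congrArg (· + 1) h
    simpa [one_add_one_eq_two] using this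
  rw [ZMod.natCast_eq_zero_iff] at h2
  exact absurd (Nat.le_of_dvd (by norm_num) h2) (by omega)


lemma two_nsmul_vec (v : Fin D → ZMod n) : 2 • v = v + v := two_nsmul v

lemma count_eq (hn : 3 ≤ n) :
    (univ.filter
        (fun p : (Fin D → ZMod n) × (Fin D → ZMod n) =>
          (∀ j, p.2 j = 0 ∨ p.2 j = 1 ∨ p.2 j = -1) ∧ p.2 ≠ 0 ∧
          L p.1 = Letter.C ∧ L (p.1 + p.2) = Letter.A ∧
          L (p.1 + 2 • p.2) = Letter.T)).card
      = ∑ u ∈ Ustar D, cnt L (tc (n := n) u) := by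
  classical
  have h10 : (1 : ZMod n) ≠ 0 := zmod_one_ne_zero hn
  have hm10 : (-1 : ZMod n) ≠ 0 := zmod_negone_ne_zero hn
  have h1m1 : (1 : ZMod n) ≠ -1 := zmod_one_ne_negone hn
  set BIG : (Fin D → ZMod n) × (Fin D → ZMod n) → Prop := fun p =>
      (∀ j, p.2 j = 0 ∨ p.2 j = 1 ∨ p.2 j = -1) ∧ p.2 ≠ 0 ∧
      L p.1 = Letter.C ∧ L (p.1 + p.2) = Letter.A ∧
      L (p.1 + 2 • p.2) = Letter.T with hBIG
  set P : (Fin D → ZMod n) → Prop := fun v =>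
      (∀ j, v j = 0 ∨ v j = 1 ∨ v j = -1) ∧ v ≠ 0 with hP
  have step1 : (univ.filter BIG).card
      = ∑ v ∈ univ, ((univ.filter BIG).filter (fun p => p.2 = v)).card :=
    Finset.card_eq_sum_card_fiberwise (fun p _ => Finset.mem_univ p.2)
  have step2 : ∀ v : Fin D → ZMod n,
      ((univ.filter BIG).filter (fun p => p.2 = v)).card = if P v then cnt L v else 0 := by
    intro v
    split_ifs with hPv
    · refine Finset.card_bij' (fun p _ => p.1 + v) (fun y _ => (y - v, v)) ?_ ?_ ?_ ?_
      · intro p hp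
        rw [Finset.mem_filter] at hp
        obtain ⟨hp1, h2⟩ := hp
        rw [Finset.mem_filter, hBIG] at hp1
        obtain ⟨_, _, _, hC, hA, hT⟩ := hp1
        rw [mem_Cen]
        subst h2
        refine ⟨?_, hA, ?_⟩
        · rwa [add_sub_cancel_right]
        · rwa [two_nsmul_vec, ← add_assoc] at hT
      · intro y hy
        rw [mem_Cen] at hy
        refine Finset.mem_filter.2 ⟨Finset.mem_filter.2 ⟨Finset.mem_univ _, ?_⟩, rfl⟩
        rw [hBIG]
        refine ⟨hPv.1, hPv.2, ?_, ?_, ?_⟩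
        · exact hy.1
        · show L (y - v + v) = Letter.A
          rw [sub_add_cancel]
          exact hy.2.1
        · show L (y - v + 2 • v) = Letter.T
          rw [two_nsmul_vec, ← add_assoc, sub_add_cancel]
          exact hy.2.2
      · intro p hp
        have h2 : p.2 = v := (Finset.mem_filter.1 hp).2
        rw [add_sub_cancel_right, ← h2]
      · intro y _
        dsimp only
        rw [sub_add_cancel]
    · rw [Finset.card_eq_zero]
      apply Finset.eq_empty_of_forall_notMem
      intro p hp
      rw [Finset.mem_filter] at hp
      obtain ⟨hp1, h2⟩ := hp
      rw [Finset.mem_filter, hBIG] at hp1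
      exact hPv (h2 ▸ ⟨hp1.2.1, hp1.2.2.1⟩)
  have step3 : (univ.filter BIG).card = ∑ v ∈ univ.filter P, cnt L v := by
    rw [step1, Finset.sum_congr rfl (fun v _ => step2 v), ← Finset.sum_filter]
  rw [step3]
  set IL : (Fin D → ZMod n) → (Fin D → ℤ) :=
    fun v => fun j => if v j = 1 then (1:ℤ) else if v j = -1 then -1 else 0 with hIL
  have hleft : ∀ v, P v → tc (n := n) (IL v) = v := by
    intro v hv
    funext j
    simp only [hIL, tc]
    rcases hv.1 j with h | h | h
    · rw [if_neg (by rw [h]; exact Ne.symm h10), if_neg (by rw [h]; exact Ne.symm hm10)]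
      rw [h]
      norm_num
    · rw [if_pos h, h]
      norm_num
    · rw [if_neg (by rw [h]; exact fun hh => h1m1 hh.symm), if_pos h, h]
      norm_num
  have hmemIL : ∀ v, P v → IL v ∈ Ustar D := by
    intro v hv
    rw [Ustar, Finset.mem_filter]
    constructor
    · rw [mem_U]
      intro j
      simp only [hIL]
      split_ifs <;> simp [tern]
    · intro h0
      apply hv.2
      rw [← hleft v hv, h0]
      funext j
      simp [tc]
  have hmemtc : ∀ u, u ∈ Ustar D → P (tc (n := n) u) := by
    intro u hu
    rw [Ustar, Finset.mem_filter, mem_U] at hu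
    constructor
    · intro j
      have hj := hu.1 j
      simp only [tern, Finset.mem_insert, Finset.mem_singleton] at hj
      rcases hj with h | h | h <;> simp [tc, h]
    · intro h0
      apply hu.2
      funext j
      have := congrFun h0 j
      simp only [tc, Pi.zero_apply] at this
      have hj := hu.1 j
      simp only [tern, Finset.mem_insert, Finset.mem_singleton] at hj
      rcases hj with h | h | h
      · rw [h] at this
        norm_num at this
        exact absurd this h10
      · exact h
      · rw [h] at this
        norm_num at this
        exact absurd this h10
  have hright : ∀ u, u ∈ Ustar D → IL (tc (n := n) u) = u := by
    intro u hu
    rw [Ustar, Finset.mem_filter, mem_U] at hu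
    funext j
    have hj := hu.1 j
    simp only [tern, Finset.mem_insert, Finset.mem_singleton] at hj
    simp only [hIL, tc]
    rcases hj with h | h | h
    · simp only [h, Int.cast_neg, Int.cast_one]
      rw [if_neg (fun hh => h1m1 hh.symm)]
      simp
    · simp only [h, Int.cast_zero]
      rw [if_neg (fun hh => h10 hh.symm), if_neg (fun hh => hm10 hh.symm)]
    · simp only [h, Int.cast_one]
      simp
  refine Finset.sum_nbij' (fun v => IL v) (fun u => tc (n := n) u) ?_ ?_ ?_ ?_ ?_
  · intro v hv
    exact hmemIL v ((Finset.mem_filter.1 hv).2)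
  · intro u hu
    exact Finset.mem_filter.2 ⟨Finset.mem_univ _, hmemtc u hu⟩
  · intro v hv
    exact hleft v ((Finset.mem_filter.1 hv).2)
  · intro u hu
    exact hright u hu
  · intro v hv
    rw [hleft v ((Finset.mem_filter.1 hv).2)]

end Main



lemma list_sum_map_one {γ : Type*} (l : List γ) : (l.map (fun _ => (1:ℕ))).sum = l.length := by
  induction l with
  | nil => simp
  | cons a l ih => simp [ih]; omega

lemma Ustar_card (d : ℕ) : (Ustar d).card + 1 = 3 ^ d := by
  have h1 : Ustar d = (U d).erase 0 := by
    ext u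
    simp only [Ustar, Finset.mem_filter, Finset.mem_erase]
    tauto
  have h2 : (U d).card = 3 ^ d := by
    rw [U, Fintype.card_piFinset]
    simp [tern]
  have h4 : 1 ≤ (3:ℕ) ^ d := Nat.one_le_pow d 3 (by norm_num)
  rw [h1, Finset.card_erase_of_mem (zero_mem_U (d := d)), h2]
  omega

section Main2
variable {n : ℕ} [NeZero n] {d : ℕ} (L : (Fin (d+1) → ZMod n) → Letter)

lemma duo_bound (α β : Fin d → ℤ) :
    ((cnt L (tc (n := n) (Fin.snoc α 1)) + cnt L (tc (n := n) (Fin.snoc (-α) (-1))))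
      + (cnt L (tc (n := n) (Fin.snoc β 1)) + cnt L (tc (n := n) (Fin.snoc (-β) (-1)))))
      + (cnt L (tc (n := n) (Fin.snoc (α - β) 0)) + cnt L (tc (n := n) (Fin.snoc (β - α) 0)))
      ≤ n ^ (d+1) := by
  set A : Fin (d+1) → ZMod n := tc (Fin.snoc α 1) with hA
  set B : Fin (d+1) → ZMod n := tc (Fin.snoc (-β) (-1)) with hB
  have e1 : tc (n := n) (Fin.snoc (-α) (-1)) = -A := by
    rw [hA, ← tc_neg, neg_snoc]
  have e2 : tc (n := n) (Fin.snoc β 1) = -B := by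
    rw [hB, ← tc_neg, neg_snoc]
    norm_num
  have e3 : tc (n := n) (Fin.snoc (α - β) 0) = A + B := by
    rw [hA, hB, ← tc_add, snoc_add_snoc]
    norm_num [sub_eq_add_neg]
  have e4 : tc (n := n) (Fin.snoc (β - α) 0) = -(A + B) := by
    rw [← e3, ← tc_neg, neg_snoc, show -(α - β) = β - α from by abel,
      show -(0:ℤ) = 0 from neg_zero]
  rw [e1, e2, e3, e4]
  have := triangle L A B
  omega

end Main2

end Cat

namespace Cat

lemma list_sum_map_add4 {γ : Type*} (l : List γ) (F1 F2 F3 F4 : γ → ℕ) :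
    (l.map (fun x => F1 x + F2 x + (F3 x + F4 x))).sum
      = (l.map F1).sum + (l.map F2).sum + ((l.map F3).sum + (l.map F4).sum) := by
  induction l with
  | nil => simp
  | cons a l ih => simp [ih]; ring

end Cat

theorem stmt_14 (n d : ℕ) [NeZero n] (hn : 3 ≤ n)
    (L : (Fin d → ZMod n) → Letter)
    (heq : ((Finset.univ.filter
        (fun p : (Fin d → ZMod n) × (Fin d → ZMod n) =>
          (∀ j, p.2 j = 0 ∨ p.2 j = 1 ∨ p.2 j = -1) ∧ p.2 ≠ 0 ∧
          L p.1 = Letter.C ∧ L (p.1 + p.2) = Letter.A ∧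
          L (p.1 + 2 • p.2) = Letter.T)).card : ℝ)
      = 3 ^ (d - 1) * n ^ d / 2) :
    4 ∣ n := by
  cases d with
  | zero =>
    exfalso
    have hempty : (Finset.univ.filter
        (fun p : (Fin 0 → ZMod n) × (Fin 0 → ZMod n) =>
          (∀ j, p.2 j = 0 ∨ p.2 j = 1 ∨ p.2 j = -1) ∧ p.2 ≠ 0 ∧
          L p.1 = Letter.C ∧ L (p.1 + p.2) = Letter.A ∧
          L (p.1 + 2 • p.2) = Letter.T)) = ∅ := by
      apply Finset.eq_empty_of_forall_notMem
      intro p hp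
      rw [Finset.mem_filter] at hp
      apply hp.2.2.1
      funext j
      exact j.elim0
    rw [hempty] at heq
    norm_num at heq
  | succ d' =>
    classical
    obtain ⟨l, hI, hII⟩ := Cat.exists_duos d'
    set σ : (Fin (d'+1) → ℤ) → ℕ := fun u => Cat.cnt L (Cat.tc (n := n) u) with hσ
    set f : (Fin d' → ℤ) → ℕ :=
      fun u => σ (Fin.snoc u 1) + σ (Fin.snoc (-u) (-1)) with hf
    set g : (Fin d' → ℤ) → ℕ := fun c => σ (Fin.snoc c 0) with hg
    set Q : Fin (d'+1) → ZMod n := Cat.tc (n := n) (Fin.snoc (Cat.pvec d') 1) with hQ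
    -- the count
    have hcount := Cat.count_eq (L := L) hn
    rw [hcount] at heq
    have h2N : 2 * (∑ u ∈ Cat.Ustar (d'+1), Cat.cnt L (Cat.tc (n := n) u))
        = 3 ^ d' * n ^ (d'+1) := by
      have hc : ((2 * (∑ u ∈ Cat.Ustar (d'+1), Cat.cnt L (Cat.tc (n := n) u)) : ℕ) : ℝ)
          = ((3 ^ d' * n ^ (d'+1) : ℕ) : ℝ) := by
        simp only [Nat.add_sub_cancel] at heq
        push_cast at heq ⊢
        linarith
      exact_mod_cast hc
    have hbridge : ∑ u ∈ Cat.Ustar (d'+1), σ u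
        = ∑ u ∈ Cat.Ustar (d'+1), Cat.cnt L (Cat.tc (n := n) u) := rfl
    -- splitting
    have e0 : ∑ v ∈ Cat.Ustar (d'+1), σ v
        = ∑ u ∈ Cat.U d', (σ (Fin.snoc u (-1)) + σ (Fin.snoc u 1))
          + ∑ u ∈ Cat.Ustar d', σ (Fin.snoc u 0) := Cat.sum_Ustar_succ σ
    have e1 : ∑ u ∈ Cat.U d', (σ (Fin.snoc u (-1)) + σ (Fin.snoc u 1))
        = ∑ u ∈ Cat.U d', σ (Fin.snoc u (-1)) + ∑ u ∈ Cat.U d', σ (Fin.snoc u 1) :=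
      Finset.sum_add_distrib
    have e2 : ∑ u ∈ Cat.U d', σ (Fin.snoc (-u) (-1))
        = ∑ u ∈ Cat.U d', σ (Fin.snoc u (-1)) :=
      Cat.sum_U_neg (fun u => σ (Fin.snoc u (-1)))
    have e3 : ∑ u ∈ Cat.U d', f u
        = ∑ u ∈ Cat.U d', σ (Fin.snoc u 1) + ∑ u ∈ Cat.U d', σ (Fin.snoc (-u) (-1)) :=
      Finset.sum_add_distrib
    have e4 := hI f
    have e5 := hII g
    have ebr2 : ∑ u ∈ Cat.Ustar d', σ (Fin.snoc u 0) = ∑ v ∈ Cat.Ustar d', g v := rfl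
    -- the special pair
    have eQ2 : σ (Fin.snoc (-(Cat.pvec d')) (-1)) = Cat.cnt L (-Q) := by
      rw [hσ]
      show Cat.cnt L (Cat.tc (Fin.snoc (-Cat.pvec d') (-1))) = Cat.cnt L (-Q)
      congr 1
      rw [hQ, ← Cat.tc_neg, Cat.neg_snoc]
    have efp : f (Cat.pvec d') = Cat.cnt L Q + Cat.cnt L (-Q) := by
      rw [hf]
      show σ (Fin.snoc (Cat.pvec d') 1) + σ (Fin.snoc (-(Cat.pvec d')) (-1)) = _
      rw [eQ2, hσ]
    -- list bound
    have merge : (l.map (fun ab => f ab.1 + f ab.2 + (g (ab.1 - ab.2) + g (ab.2 - ab.1)))).sum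
        = (l.map (fun ab => f ab.1)).sum + (l.map (fun ab => f ab.2)).sum
          + ((l.map (fun ab => g (ab.1 - ab.2))).sum + (l.map (fun ab => g (ab.2 - ab.1))).sum) :=
      Cat.list_sum_map_add4 l _ _ _ _
    have bound : (l.map (fun ab => f ab.1 + f ab.2 + (g (ab.1 - ab.2) + g (ab.2 - ab.1)))).sum
        ≤ l.length * n ^ (d'+1) := by
      have hb : ∀ x ∈ l.map (fun ab => f ab.1 + f ab.2 + (g (ab.1 - ab.2) + g (ab.2 - ab.1))),
          x ≤ n ^ (d'+1) := by
        intro x hx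
        obtain ⟨ab, hab, rfl⟩ := List.mem_map.1 hx
        exact Cat.duo_bound L ab.1 ab.2
      have := List.sum_le_card_nsmul _ _ hb
      rwa [List.length_map, smul_eq_mul] at this
    -- length
    have hlen : 2 * l.length + 1 = 3 ^ d' := by
      have h1 := hII (fun _ => (1:ℕ))
      have h2 : (l.map (fun ab : (Fin d' → ℤ) × (Fin d' → ℤ) => (1:ℕ))).sum = l.length :=
        Cat.list_sum_map_one l
      have h3 : ∑ _v ∈ Cat.Ustar d', (1:ℕ) = (Cat.Ustar d').card := by simp
      have h4 := Cat.Ustar_card d'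
      omega
    -- final arithmetic
    have hpair := Cat.pair_le L Q
    have hexp : (2 * l.length + 1) * n ^ (d'+1)
        = 2 * (l.length * n ^ (d'+1)) + n ^ (d'+1) := by ring
    have h3K : 3 ^ d' * n ^ (d'+1) = 2 * (l.length * n ^ (d'+1)) + n ^ (d'+1) := by
      rw [← hlen, hexp]
    have hQeq : 2 * (Cat.cnt L Q + Cat.cnt L (-Q)) = n ^ (d'+1) := by
      omega
    exact Cat.four_dvd_of_eq L hn (Nat.succ_ne_zero d') Q hQeq
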